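/- arXiv:2307.04093 — 6 statements merged into one kernel-verified Lean document; each statement's English description precedes it below -/
import Mathlib

section
/- Let G be an n-vertex graph and IsEdge_G : {0,1}^n → {0,1} the edge-indicator function. Any root-to-leaf path in a decision tree computing IsEdge_G that is followed by the all-zeros input must query a set of variables whose corresponding vertices form a vertex cover of G. -/
open Classical

inductive DTree (α : Type) : Type where
  | leaf (b : Bool) : DTree α
  | node (i : α) (l r : DTree α) : DTree α

def DTree.eval {α : Type} : DTree α → (α → Bool) → Bool
  | .leaf b, _ => b
  | .node i l r, x => if x i then r.eval x else l.eval x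

/-- The root-to-leaf path followed by input `x`, as a list of (variable, value) literals. -/
def DTree.pathOf {α : Type} : DTree α → (α → Bool) → List (α × Bool)
  | .leaf _, _ => []
  | .node i l r, x => (i, x i) :: (if x i then r.pathOf x else l.pathOf x)

/-- The edge-indicator function of G: outputs 1 iff the input is the indicator string
of some edge of G. -/
noncomputable def isEdge {n : ℕ} (G : SimpleGraph (Fin n)) (x : Fin n → Bool) : Bool :=
  decide (∃ e ∈ G.edgeSet, x = fun i => decide (i ∈ e))

/-! The all-zeros input and the indicator of the edge `uv` disagree only at `u` and `v`, and
`IsEdge_G` separates them; so the zero path must query `u` or `v`. -/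

namespace DTree

variable {α : Type}

theorem eval_eq_of_forall_mem_pathOf (T : DTree α) {x y : α → Bool}
    (h : ∀ p ∈ T.pathOf y, x p.1 = y p.1) : T.eval x = T.eval y := by
  induction T with
  | leaf b => rfl
  | node i l r ihl ihr =>
    have hi : x i = y i := h (i, y i) (by simp [pathOf])
    cases hyi : y i with
    | false =>
      simp only [eval, hi, hyi]
      exact ihl fun p hp => h p (by simp [pathOf, hyi, hp])
    | true =>
      simp only [eval, hi, hyi]
      exact ihr fun p hp => h p (by simp [pathOf, hyi, hp])

theorem exists_mem_pathOf_ne_of_eval_ne (T : DTree α) {x y : α → Bool}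
    (h : T.eval x ≠ T.eval y) : ∃ p ∈ T.pathOf y, x p.1 ≠ y p.1 := by
  contrapose! h
  exact T.eval_eq_of_forall_mem_pathOf h

end DTree

section isEdge

variable {n : ℕ} (G : SimpleGraph (Fin n))

theorem isEdge_indicator_of_adj {u v : Fin n} (huv : G.Adj u v) :
    isEdge G (fun i => decide (i ∈ s(u, v))) = true := by
  unfold isEdge
  exact decide_eq_true ⟨s(u, v), G.mem_edgeSet.mpr huv, rfl⟩

theorem isEdge_zero : isEdge G (fun _ => false) = false := by
  unfold isEdge
  refine decide_eq_false fun ⟨e, _, he⟩ => ?_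
  simpa [e.out_fst_mem] using congrFun he e.out.1

end isEdge

/-- in any decision tree computing IsEdge_G, the variables queried along the
path followed by the all-zeros input form a vertex cover of G. -/
theorem stmt8 {n : ℕ} (G : SimpleGraph (Fin n)) (T : DTree (Fin n))
    (hT : ∀ x, T.eval x = isEdge G x) :
    ∀ ⦃u v : Fin n⦄, G.Adj u v →
      (∃ p ∈ T.pathOf (fun _ => false), p.1 = u) ∨
      (∃ p ∈ T.pathOf (fun _ => false), p.1 = v) := by
  intro u v huv
  have hne : T.eval (fun i => decide (i ∈ s(u, v))) ≠ T.eval (fun _ => false) := by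
    rw [hT, hT, isEdge_indicator_of_adj G huv, isEdge_zero]
    decide
  obtain ⟨p, hp, hpuv⟩ := T.exists_mem_pathOf_ne_of_eval_ne hne
  have hp_mem : p.1 = u ∨ p.1 = v := or_iff_not_imp_left.mpr (by simpa using hpuv)
  exact hp_mem.imp (fun h => ⟨p, hp, h⟩) (fun h => ⟨p, hp, h⟩)
end

section
/- If a graph G with n vertices and m edges has a vertex cover of size at most k, then there exists a decision tree computing IsEdge_G of size at most k + m + mn. -/
open Classical

def DTree.size {α : Type} : DTree α → ℕ
  | .leaf _ => 0
  | .node _ l r => 1 + l.size + r.size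

/-!
Query the vertices `v` of the cover one after another. If `x v = 0`, no edge at `v` can be the
input, so we continue with the graph `G - v` (all edges at `v` deleted), which is still covered
by the remaining vertices. If `x v = 1`, the input is an edge iff it is `{v, w}` for a neighbour
`w`: query the neighbours in turn, and at the first `w` with `x w = 1` check that all other
coordinates vanish. This costs at most `n + 1` queries per edge at `v`, and these edges are gone
from `G - v`, so the tree has at most `|C| + m (n + 1)` internal nodes.
-/

namespace DTree

variable {α : Type}

def allFalse (l : List α) : DTree α :=
  l.foldr (fun i t => node i t (leaf false)) (leaf true)

theorem eval_allFalse (l : List α) (x : α → Bool) :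
    (allFalse l).eval x = true ↔ ∀ i ∈ l, x i = false := by
  induction l with
  | nil => simp [allFalse, eval]
  | cons a l ih =>
    change (node a (allFalse l) (leaf false)).eval x = true ↔ _
    cases hxa : x a <;> simp [eval, hxa, ih]

theorem size_allFalse (l : List α) : (allFalse l).size = l.length := by
  induction l with
  | nil => rfl
  | cons a l ih =>
    change (node a (allFalse l) (leaf false)).size = _
    simp only [size, ih, List.length_cons]
    omega

def onFirstTrue (t : α → DTree α) (l : List α) : DTree α :=
  l.foldr (fun i acc => node i acc (t i)) (leaf false)

theorem eval_onFirstTrue (t : α → DTree α) (l : List α) (x : α → Bool)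
    (ht : ∀ i ∈ l, (t i).eval x = true → ∀ j ∈ l, j ≠ i → x j = false) :
    (onFirstTrue t l).eval x = true ↔ ∃ i ∈ l, x i = true ∧ (t i).eval x = true := by
  induction l with
  | nil => simp [onFirstTrue, eval]
  | cons a l ih =>
    change (node a (onFirstTrue t l) (t a)).eval x = true ↔ _
    have ih := ih fun i hi hti j hj => ht i (.tail a hi) hti j (.tail a hj)
    by_cases hxa : x a = true
    · rw [eval, if_pos hxa]
      refine ⟨fun hta => ⟨a, List.mem_cons_self, hxa, hta⟩, ?_⟩
      rintro ⟨i, hi, -, hti⟩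
      by_contra hta
      have hai : a ≠ i := by rintro rfl; exact hta hti
      simp [ht i hi hti a List.mem_cons_self hai] at hxa
    · simp [eval, hxa, ih]

theorem size_onFirstTrue_le (t : α → DTree α) (l : List α) {b : ℕ}
    (ht : ∀ i ∈ l, (t i).size ≤ b) : (onFirstTrue t l).size ≤ l.length * (b + 1) := by
  induction l with
  | nil => simp [onFirstTrue, size]
  | cons a l ih =>
    change (node a (onFirstTrue t l) (t a)).size ≤ _
    have := ih fun i hi => ht i (.tail a hi)
    have := ht a List.mem_cons_self
    simp only [size, List.length_cons]
    nlinarith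

end DTree

open DTree

namespace SimpleGraph

variable {n : ℕ} (G : SimpleGraph (Fin n))

theorem isEdge_eq_true_iff (x : Fin n → Bool) :
    isEdge G x = true ↔ ∃ e ∈ G.edgeSet, x = fun i => decide (i ∈ e) := by
  simp [isEdge]

theorem isEdge_deleteIncidenceSet {x : Fin n → Bool} {v : Fin n} (hv : x v = false) :
    isEdge (G.deleteIncidenceSet v) x = isEdge G x := by
  rw [Bool.eq_iff_iff, isEdge_eq_true_iff, isEdge_eq_true_iff, edgeSet_deleteIncidenceSet]
  refine exists_congr fun e => and_congr_left fun hx => ⟨fun he => he.1, fun he => ⟨he, ?_⟩⟩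
  rintro ⟨-, hve⟩
  simp [hx, hve] at hv

theorem isEdge_eq_true_iff_of_apply_eq_true {x : Fin n → Bool} {v : Fin n} (hv : x v = true) :
    isEdge G x = true ↔
      ∃ w, G.Adj v w ∧ x w = true ∧ ∀ i ∈ Finset.univ \ {v, w}, x i = false := by
  rw [isEdge_eq_true_iff]
  constructor
  · rintro ⟨e, he, rfl⟩
    obtain ⟨w, rfl⟩ := Sym2.mem_iff_exists.mp (by simpa using hv : v ∈ e)
    refine ⟨w, he, by simp, fun i hi => ?_⟩
    simp only [Finset.mem_sdiff, Finset.mem_insert, Finset.mem_singleton] at hi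
    simpa using hi
  · rintro ⟨w, hvw, hw, hrest⟩
    refine ⟨s(v, w), hvw, funext fun i => ?_⟩
    by_cases hi : i = v ∨ i = w
    · rcases hi with rfl | rfl <;> simp [*]
    · simp_all

variable [DecidableRel G.Adj]

noncomputable def star (v : Fin n) : DTree (Fin n) :=
  onFirstTrue (fun w => allFalse (Finset.univ \ {v, w}).toList) (G.neighborFinset v).toList

theorem eval_star {x : Fin n → Bool} {v : Fin n} (hv : x v = true) :
    (G.star v).eval x = isEdge G x := by
  rw [Bool.eq_iff_iff, star, eval_onFirstTrue, isEdge_eq_true_iff_of_apply_eq_true G hv]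
  · simp [eval_allFalse]
  · intro w _ hw j hj hjw
    rw [eval_allFalse] at hw
    have hvj : v ≠ j := (by simpa using hj : G.Adj v j).ne
    exact hw j (by simp [hvj.symm, hjw])

theorem size_star_le (v : Fin n) : (G.star v).size ≤ G.degree v * (n + 1) := by
  rw [← card_neighborFinset_eq_degree, ← Finset.length_toList]
  refine size_onFirstTrue_le _ _ fun w _ => ?_
  rw [size_allFalse, Finset.length_toList]
  exact (Finset.card_le_univ _).trans_eq (Fintype.card_fin n)

noncomputable def coverTree (G : SimpleGraph (Fin n)) [DecidableRel G.Adj] :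
    List (Fin n) → DTree (Fin n)
  | [] => leaf false
  | v :: cs => node v ((G.deleteIncidenceSet v).coverTree cs) (G.star v)

theorem eval_coverTree (cs : List (Fin n)) (hcs : ∀ ⦃u w⦄, G.Adj u w → u ∈ cs ∨ w ∈ cs)
    (x : Fin n → Bool) : (G.coverTree cs).eval x = isEdge G x := by
  induction cs generalizing G with
  | nil =>
    change false = _
    rw [eq_comm, Bool.eq_false_iff, ne_eq, isEdge_eq_true_iff]
    rintro ⟨e, he, -⟩
    induction e using Sym2.ind
    simpa using hcs he
  | cons v cs ih =>
    change (node v _ _).eval x = _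
    cases hv : x v
    · have hcs' : ∀ ⦃u w⦄, (G.deleteIncidenceSet v).Adj u w → u ∈ cs ∨ w ∈ cs := by
        intro u w huw
        rw [deleteIncidenceSet_adj] at huw
        simpa [huw.2.1, huw.2.2] using hcs huw.1
      simp [eval, hv, ih _ hcs', isEdge_deleteIncidenceSet G hv]
    · simp [eval, hv, eval_star G hv]

theorem size_coverTree_le (cs : List (Fin n)) :
    (G.coverTree cs).size ≤ cs.length + G.edgeFinset.card * (n + 1) := by
  induction cs generalizing G with
  | nil => simp [coverTree, size]
  | cons v cs ih =>
    have hrest := ih (G.deleteIncidenceSet v)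
    rw [card_edgeFinset_deleteIncidenceSet] at hrest
    have hstar := size_star_le G v
    have hedges : (G.edgeFinset.card - G.degree v) * (n + 1) + G.degree v * (n + 1) =
        G.edgeFinset.card * (n + 1) := by
      rw [← add_mul, Nat.sub_add_cancel (G.degree_le_card_edgeFinset v)]
    change 1 + _ + _ ≤ cs.length + 1 + _
    omega

end SimpleGraph

/-- if G (n vertices, m edges) has a vertex cover of size at most k, then there
is a decision tree computing IsEdge_G of size at most k + m + mn. -/
theorem stmt9 {n : ℕ} (G : SimpleGraph (Fin n)) [DecidableRel G.Adj] (k : ℕ)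
    (C : Finset (Fin n)) (hC : ∀ ⦃u v : Fin n⦄, G.Adj u v → u ∈ C ∨ v ∈ C)
    (hCk : C.card ≤ k) :
    ∃ T : DTree (Fin n), (∀ x, T.eval x = isEdge G x) ∧
      T.size ≤ k + G.edgeFinset.card + G.edgeFinset.card * n := by
  refine ⟨G.coverTree C.toList, G.eval_coverTree _ (by simpa using hC), ?_⟩
  have := G.size_coverTree_le C.toList
  rw [Finset.length_toList] at this
  linarith
end

section
/- If every vertex cover of a graph G with n vertices and m edges has size at least k', then every decision tree computing IsEdge_G has size at least k' + m. -/
open Classical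

/-!
Let `Q` be the set of variables queried on the path of the all-zero input. If an edge avoided
`Q`, its indicator would follow that path too, so `Q` is a vertex cover and `|Q| ≥ k'`.
Each node on the path, querying `i` after the earlier queries were answered `0`, has a right
subtree that must detect every edge `{i, v}` not met earlier: flipping `v` in the indicator of `{i}`
changes the output, so `v` is queried on that input's path. These right subtrees therefore
account for all `m` edges, and the path itself for `|Q|` further nodes.
-/

namespace DTree

variable {α : Type} [DecidableEq α]

def queriedVars : DTree α → (α → Bool) → Finset α
  | .leaf _, _ => ∅
  | .node i l r, x => insert i (if x i then r.queriedVars x else l.queriedVars x)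

theorem card_queriedVars_le_size (T : DTree α) (x : α → Bool) :
    (T.queriedVars x).card ≤ T.size := by
  induction T with
  | leaf b => simp [queriedVars]
  | node i l r ihl ihr =>
    refine (Finset.card_insert_le _ _).trans ?_
    simp only [size]
    split <;> omega

theorem eval_eq_of_eqOn_queriedVars (T : DTree α) {x y : α → Bool}
    (h : ∀ i ∈ T.queriedVars x, x i = y i) : T.eval x = T.eval y := by
  induction T with
  | leaf b => rfl
  | node i l r ihl ihr =>
    simp only [queriedVars, Finset.mem_insert, forall_eq_or_imp] at h
    obtain ⟨hi, hrest⟩ := h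
    simp only [eval, ← hi]
    cases hxi : x i
    · exact ihl (by simpa [hxi] using hrest)
    · exact ihr (by simpa [hxi] using hrest)

theorem mem_queriedVars_of_eval_update_ne (T : DTree α) {x : α → Bool} {v : α} {b : Bool}
    (h : T.eval (Function.update x v b) ≠ T.eval x) : v ∈ T.queriedVars x := by
  contrapose! h
  refine (T.eval_eq_of_eqOn_queriedVars fun i hi => ?_).symm
  rw [Function.update_of_ne (ne_of_mem_of_not_mem hi h)]

end DTree

section IsEdge

variable {n : ℕ} (G : SimpleGraph (Fin n))

theorem isEdge_indicator {e : Sym2 (Fin n)} (he : e ∈ G.edgeSet) :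
    isEdge G (fun i => decide (i ∈ e)) = true := by
  simpa [isEdge] using ⟨e, he, rfl⟩

theorem isEdge_eq_false_of_subsingleton {x : Fin n → Bool}
    (hx : ∀ i j, x i = true → x j = true → i = j) : isEdge G x = false := by
  simp only [isEdge, decide_eq_false_iff_not, not_exists, not_and]
  intro e he hxe
  induction e using Sym2.ind with
  | _ u v => exact G.ne_of_adj he (hx u v (by simp [hxe]) (by simp [hxe]))

theorem isVertexCover_queriedVars_false (T : DTree (Fin n))
    (hT : ∀ x, T.eval x = isEdge G x) :
    G.IsVertexCover ↑(T.queriedVars fun _ => false) := by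
  intro u v huv
  by_contra! h
  have hsame : T.eval (fun _ => false) = T.eval fun i => decide (i ∈ s(u, v)) :=
    T.eval_eq_of_eqOn_queriedVars fun i hi => by
      have : i ≠ u ∧ i ≠ v := ⟨ne_of_mem_of_not_mem hi h.1, ne_of_mem_of_not_mem hi h.2⟩
      simp [this]
  rw [hT, hT, isEdge_indicator G huv, isEdge_eq_false_of_subsingleton G (by simp)] at hsame
  exact Bool.false_ne_true hsame

theorem card_incident_edges_le_size [DecidableRel G.Adj] (T : DTree (Fin n)) (S : Finset (Fin n))
    (i : Fin n) (hT : ∀ x, (∀ s ∈ S, x s = false) → x i = true → T.eval x = isEdge G x) :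
    {e ∈ G.edgeFinset | (∀ v ∈ e, v ∉ S) ∧ i ∈ e}.card ≤ T.size := by
  set β : Fin n → Bool := Function.update (fun _ => false) i true
  have hβS (hi : i ∉ S) : ∀ s ∈ S, β s = false := fun s hs => by
    simp [β, ne_of_mem_of_not_mem hs hi]
  have hsub : {e ∈ G.edgeFinset | (∀ v ∈ e, v ∉ S) ∧ i ∈ e} ⊆
      (T.queriedVars β).image fun v => s(i, v) := by
    intro e he
    simp only [Finset.mem_filter, SimpleGraph.mem_edgeFinset] at he
    obtain ⟨he, hS, hie⟩ := he
    obtain ⟨v, rfl⟩ := Sym2.mem_iff_exists.mp hie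
    refine Finset.mem_image.mpr ⟨v, T.mem_queriedVars_of_eval_update_ne (b := true) ?_, rfl⟩
    have hindicator : Function.update β v true = fun j => decide (j ∈ s(i, v)) := by
      funext j
      by_cases hj : j = v <;> by_cases hj' : j = i <;> simp [β, Function.update_apply, hj, hj']
    have hiS := hS i (Sym2.mem_mk_left i v)
    have hvS := hS v (Sym2.mem_mk_right i v)
    have hedgeS : ∀ s ∈ S, Function.update β v true s = false := fun s hs => by
      rw [Function.update_of_ne (ne_of_mem_of_not_mem hs hvS)]
      exact hβS hiS s hs
    rw [hT _ hedgeS (by simp [hindicator]), hT β (hβS hiS) (by simp [β]), hindicator,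
      isEdge_indicator G he,
      isEdge_eq_false_of_subsingleton G (by simp [β, Function.update_apply])]
    decide
  calc _ ≤ ((T.queriedVars β).image fun v => s(i, v)).card := Finset.card_le_card hsub
    _ ≤ (T.queriedVars β).card := Finset.card_image_le
    _ ≤ T.size := T.card_queriedVars_le_size β

theorem card_queriedVars_false_add_card_edges_le_size [DecidableRel G.Adj]
    (T : DTree (Fin n)) (S : Finset (Fin n))
    (hT : ∀ x, (∀ s ∈ S, x s = false) → T.eval x = isEdge G x) :
    (T.queriedVars fun _ => false).card + {e ∈ G.edgeFinset | ∀ v ∈ e, v ∉ S}.card ≤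
      T.size := by
  induction T generalizing S with
  | leaf b =>
    suffices {e ∈ G.edgeFinset | ∀ v ∈ e, v ∉ S} = ∅ by
      simp [DTree.queriedVars, DTree.size, this]
    refine Finset.eq_empty_of_forall_notMem fun e he => ?_
    simp only [Finset.mem_filter, SimpleGraph.mem_edgeFinset] at he
    have h₁ := hT (fun i => decide (i ∈ e)) fun s hs => by simpa using fun h => he.2 s h hs
    have h₀ := hT (fun _ => false) fun _ _ => rfl
    rw [isEdge_indicator G he.1] at h₁
    rw [isEdge_eq_false_of_subsingleton G (by simp)] at h₀
    exact Bool.false_ne_true (h₀.symm.trans h₁)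
  | node i l r ihl ihr =>
    have hl := ihl (insert i S) fun x hx => by
      have hxi : x i = false := hx i (Finset.mem_insert_self i S)
      rw [← hT x fun s hs => hx s (Finset.mem_insert_of_mem hs)]
      simp [DTree.eval, hxi]
    have hr := card_incident_edges_le_size G r S i fun x hx hxi => by
      rw [← hT x hx]
      simp [DTree.eval, hxi]
    have hsplit := Finset.card_filter_add_card_filter_not
      (s := {e ∈ G.edgeFinset | ∀ v ∈ e, v ∉ S}) (p := fun e => i ∈ e)
    have hleft : {e ∈ {e ∈ G.edgeFinset | ∀ v ∈ e, v ∉ S} | i ∉ e} =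
        {e ∈ G.edgeFinset | ∀ v ∈ e, v ∉ insert i S} := by
      ext e
      simp only [Finset.mem_filter, Finset.mem_insert, not_or]
      constructor
      · rintro ⟨⟨he, hS⟩, hie⟩
        exact ⟨he, fun v hv => ⟨fun h => hie (h ▸ hv), hS v hv⟩⟩
      · rintro ⟨he, hS⟩
        exact ⟨⟨he, fun v hv => (hS v hv).2⟩, fun hi => (hS i hi).1 rfl⟩
    have hquery : (DTree.queriedVars (.node i l r) fun _ => false).card ≤
        (l.queriedVars fun _ => false).card + 1 := by
      simpa [DTree.queriedVars] using Finset.card_insert_le i _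
    rw [Finset.filter_filter, hleft] at hsplit
    simp only [DTree.size]
    omega

end IsEdge

/-- if every vertex cover of G (m edges) has size at least k', then every
decision tree computing IsEdge_G has size at least k' + m. -/
theorem stmt10 {n : ℕ} (G : SimpleGraph (Fin n)) [DecidableRel G.Adj] (k' : ℕ)
    (hk : ∀ C : Finset (Fin n), (∀ ⦃u v : Fin n⦄, G.Adj u v → u ∈ C ∨ v ∈ C) → k' ≤ C.card)
    (T : DTree (Fin n)) (hT : ∀ x, T.eval x = isEdge G x) :
    k' + G.edgeFinset.card ≤ T.size := by
  have hcover := hk _ (isVertexCover_queriedVars_false G T hT)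
  have hcount := card_queriedVars_false_add_card_edges_le_size G T ∅ fun x _ => hT x
  simp only [Finset.notMem_empty, not_false_eq_true, implies_true, Finset.filter_true] at hcount
  omega
end

section
/- If a graph G with n vertices and m edges has a vertex cover of size at most k, then for any ℓ ∈ ℕ there is a decision tree computing the ℓ-amplified edge-indicator function ℓ-IsEdge_G of size at most (ℓ+1)(k+m) + mn. -/
/-!
Query row 0 at the cover vertices in increasing order, stopping at the first `u ∈ C` that
reads 1. Below it, check the `ℓ` duplicates of `u`, then query the neighbours `v` of `u` that are
not smaller cover vertices (those already read 0); at the first 1, check that every other row-0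
coordinate is 0 and that the `ℓ` duplicates of `v` are 1. Each cover vertex costs `ℓ + 1`
queries, and each edge is handled below exactly one cover vertex, its smallest endpoint in `C`,
at a cost of at most `n + ℓ + 1` queries: in total `k (ℓ + 1) + m (n + ℓ + 1)`.
-/

open Classical

/-- The ℓ-amplified edge-indicator function of G. An input is a tuple
`(v⁽⁰⁾, v⁽¹⁾, ..., v⁽ˡ⁾)` of strings in {0,1}ⁿ, encoded as `x : Fin (ℓ+1) × Fin n → Bool`
with `x (j, i) = v⁽ʲ⁾ᵢ`. Output is 1 iff `v⁽⁰⁾` is the indicator string of an edge of G and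
every duplicated coordinate of each 1-coordinate of `v⁽⁰⁾` is 1. -/
noncomputable def ellIsEdge {n : ℕ} (ℓ : ℕ) (G : SimpleGraph (Fin n))
    (x : Fin (ℓ + 1) × Fin n → Bool) : Bool :=
  decide ((∃ e ∈ G.edgeSet, (fun i => x (0, i)) = fun i => decide (i ∈ e)) ∧
    ∀ (j : Fin (ℓ + 1)) (i : Fin n), x (0, i) = true → x (j, i) = true)

namespace DTree

variable {α ι : Type}

def checkAll (b : Bool) : List α → DTree α → DTree α
  | [], t => t
  | q :: qs, t =>
    if b then .node q (.leaf false) (checkAll b qs t) else .node q (checkAll b qs t) (.leaf false)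

theorem eval_checkAll (b : Bool) (qs : List α) (t : DTree α) (x : α → Bool) :
    (checkAll b qs t).eval x = if ∀ q ∈ qs, x q = b then t.eval x else false := by
  induction qs with
  | nil => simp [checkAll]
  | cons q qs ih => cases b <;> cases hq : x q <;> simp [checkAll, eval, hq, ih]

theorem size_checkAll (b : Bool) (qs : List α) (t : DTree α) :
    (checkAll b qs t).size = qs.length + t.size := by
  induction qs with
  | nil => simp [checkAll]
  | cons q qs ih => cases b <;> simp [checkAll, size, ih] <;> omega

def branchOnFirst (query : ι → α) (br : ι → DTree α) (d : DTree α) : List ι → DTree α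
  | [] => d
  | i :: is => .node (query i) (branchOnFirst query br d is) (br i)

theorem eval_branchOnFirst (query : ι → α) (br : ι → DTree α) (d : DTree α) (is : List ι)
    (x : α → Bool) :
    (branchOnFirst query br d is).eval x =
      (is.find? (x ∘ query)).elim (d.eval x) fun i => (br i).eval x := by
  induction is with
  | nil => simp [branchOnFirst]
  | cons i is ih => cases hi : x (query i) <;> simp [branchOnFirst, eval, hi, ih]

theorem size_branchOnFirst (query : ι → α) (br : ι → DTree α) (d : DTree α) (is : List ι) :
    (branchOnFirst query br d is).size = (is.map fun i => (br i).size + 1).sum + d.size := by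
  induction is with
  | nil => simp [branchOnFirst]
  | cons i is ih => simp [branchOnFirst, size, ih]; omega

end DTree

section IsEdge

variable {n ℓ : ℕ} {G : SimpleGraph (Fin n)} {x : Fin (ℓ + 1) × Fin n → Bool}

theorem ellIsEdge_eq_true_iff :
    ellIsEdge ℓ G x = true ↔ ∃ u v, G.Adj u v ∧ (∀ i, x (0, i) = true ↔ i = u ∨ i = v) ∧
      ∀ j, x (j, u) = true ∧ x (j, v) = true := by
  simp only [ellIsEdge, decide_eq_true_eq, funext_iff]
  constructor
  · rintro ⟨⟨e, he, hrow⟩, hdup⟩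
    induction e using Sym2.inductionOn with
    | hf u v =>
      have hrow' : ∀ i, x (0, i) = true ↔ i = u ∨ i = v := fun i => by simp [hrow i]
      exact ⟨u, v, he, hrow', fun j => ⟨hdup j u ((hrow' u).2 (.inl rfl)),
        hdup j v ((hrow' v).2 (.inr rfl))⟩⟩
  · rintro ⟨u, v, huv, hrow, hdup⟩
    refine ⟨⟨s(u, v), huv, fun i => ?_⟩, fun j i hi => ?_⟩
    · rw [Bool.eq_iff_iff, hrow i]
      simp
    · rcases (hrow i).1 hi with rfl | rfl
      exacts [(hdup j).1, (hdup j).2]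

theorem ellIsEdge_eq_false_of_dup {u : Fin n} {j : Fin (ℓ + 1)} (hu : x (0, u) = true)
    (hj : x (j, u) = false) : ellIsEdge ℓ G x = false := by
  rw [← Bool.not_eq_true, ellIsEdge_eq_true_iff]
  rintro ⟨a, b, -, hrow, hdup⟩
  rcases (hrow u).1 hu with rfl | rfl
  · simp [(hdup j).1] at hj
  · simp [(hdup j).2] at hj

theorem ellIsEdge_eq_false_of_forall_adj {u : Fin n} (hu : x (0, u) = true)
    (h : ∀ v, G.Adj u v → x (0, v) = false) : ellIsEdge ℓ G x = false := by
  rw [← Bool.not_eq_true, ellIsEdge_eq_true_iff]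
  rintro ⟨a, b, hab, hrow, -⟩
  rcases (hrow u).1 hu with rfl | rfl
  · simpa [h b hab] using (hrow b).2 (.inr rfl)
  · simpa [h a hab.symm] using (hrow a).2 (.inl rfl)

theorem ellIsEdge_eq_false_of_cover {C : Finset (Fin n)}
    (hC : ∀ ⦃u v : Fin n⦄, G.Adj u v → u ∈ C ∨ v ∈ C) (h : ∀ w ∈ C, x (0, w) = false) :
    ellIsEdge ℓ G x = false := by
  rw [← Bool.not_eq_true, ellIsEdge_eq_true_iff]
  rintro ⟨a, b, hab, hrow, -⟩
  rcases hC hab with ha | hb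
  · simpa [h a ha] using (hrow a).2 (.inl rfl)
  · simpa [h b hb] using (hrow b).2 (.inr rfl)

end IsEdge

section CoverTree

open DTree

variable {n ℓ : ℕ}

def dupQueries (ℓ : ℕ) (u : Fin n) : List (Fin (ℓ + 1) × Fin n) :=
  (List.finRange ℓ).map fun j => (j.succ, u)

noncomputable def edgeCheck (ℓ : ℕ) (u v : Fin n) : DTree (Fin (ℓ + 1) × Fin n) :=
  checkAll false ((Finset.univ \ {u, v}).toList.map fun w => (0, w))
    (checkAll true (dupQueries ℓ v) (.leaf true))

noncomputable def laterNbrs (G : SimpleGraph (Fin n)) (C : Finset (Fin n)) (u : Fin n) :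
    Finset (Fin n) :=
  {v | G.Adj u v ∧ ¬(v ∈ C ∧ v < u)}

noncomputable def coverBranch (G : SimpleGraph (Fin n)) (C : Finset (Fin n)) (ℓ : ℕ) (u : Fin n) :
    DTree (Fin (ℓ + 1) × Fin n) :=
  checkAll true (dupQueries ℓ u)
    (branchOnFirst (fun v => (0, v)) (edgeCheck ℓ u) (.leaf false) (laterNbrs G C u).toList)

noncomputable def coverTree (G : SimpleGraph (Fin n)) (C : Finset (Fin n)) (ℓ : ℕ) :
    DTree (Fin (ℓ + 1) × Fin n) :=
  branchOnFirst (fun u => (0, u)) (coverBranch G C ℓ) (.leaf false) (C.sort (· ≤ ·))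

variable {G : SimpleGraph (Fin n)} {C : Finset (Fin n)} {x : Fin (ℓ + 1) × Fin n → Bool}

theorem forall_mem_dupQueries {u : Fin n} (hu : x (0, u) = true) :
    (∀ q ∈ dupQueries ℓ u, x q = true) ↔ ∀ j, x (j, u) = true := by
  simp [dupQueries, Fin.forall_fin_succ, hu]

theorem eval_edgeCheck {u v : Fin n} (huv : G.Adj u v) (hu : x (0, u) = true)
    (hv : x (0, v) = true) (hdu : ∀ j, x (j, u) = true) :
    (edgeCheck ℓ u v).eval x = ellIsEdge ℓ G x := by
  have hzero : (∀ q ∈ (Finset.univ \ {u, v}).toList.map fun w => ((0 : Fin (ℓ + 1)), w),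
      x q = false) ↔ ∀ w, x (0, w) = true → w = u ∨ w = v := by
    simp only [List.forall_mem_map, Finset.mem_toList, Finset.mem_sdiff, Finset.mem_univ,
      true_and, Finset.mem_insert, Finset.mem_singleton, ← Bool.not_eq_true]
    exact forall_congr' fun w => not_imp_not
  simp only [edgeCheck, eval_checkAll, hzero, forall_mem_dupQueries hv]
  rw [Bool.eq_iff_iff, ellIsEdge_eq_true_iff]
  constructor
  · intro h
    split_ifs at h with hrow hdv
    exact ⟨u, v, huv, fun i => ⟨hrow i, by rintro (rfl | rfl) <;> assumption⟩,
      fun j => ⟨hdu j, hdv j⟩⟩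
  · rintro ⟨a, b, -, hrow, hdup⟩
    have hu' := (hrow u).1 hu
    have hv' := (hrow v).1 hv
    have hab : ∀ w, w = a ∨ w = b → w = u ∨ w = v := by
      rintro w (rfl | rfl) <;> rcases hu' with rfl | rfl <;> rcases hv' with rfl | rfl <;>
        simp_all [G.ne_of_adj huv]
    have hdv : ∀ j, x (j, v) = true := by
      intro j; rcases hv' with rfl | rfl
      exacts [(hdup j).1, (hdup j).2]
    rw [if_pos fun w hw => hab w ((hrow w).1 hw), if_pos hdv]
    rfl

theorem eval_coverBranch {u : Fin n} (hu : x (0, u) = true)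
    (hearlier : ∀ w ∈ C, w < u → x (0, w) = false) :
    (coverBranch G C ℓ u).eval x = ellIsEdge ℓ G x := by
  simp only [coverBranch, eval_checkAll, forall_mem_dupQueries hu]
  split_ifs with hdu
  · rw [eval_branchOnFirst]
    cases hfind : (laterNbrs G C u).toList.find? (x ∘ fun v => (0, v)) with
    | none =>
      rw [List.find?_eq_none] at hfind
      refine (ellIsEdge_eq_false_of_forall_adj hu fun v huv => ?_).symm
      by_cases hv : v ∈ laterNbrs G C u
      · simpa using hfind v (Finset.mem_toList.2 hv)
      · simp only [laterNbrs, Finset.mem_filter, Finset.mem_univ, true_and, huv,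
          not_not] at hv
        exact hearlier v hv.1 hv.2
    | some v =>
      have hv := Finset.mem_toList.1 (List.mem_of_find?_eq_some hfind)
      simp only [laterNbrs, Finset.mem_filter, Finset.mem_univ, true_and] at hv
      exact eval_edgeCheck hv.1 hu (by simpa using List.find?_some hfind) hdu
  · obtain ⟨j, hj⟩ := not_forall.1 hdu
    exact (ellIsEdge_eq_false_of_dup hu (Bool.eq_false_iff.2 hj)).symm

theorem eval_coverTree (hC : ∀ ⦃u v : Fin n⦄, G.Adj u v → u ∈ C ∨ v ∈ C)
    (x : Fin (ℓ + 1) × Fin n → Bool) :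
    (coverTree G C ℓ).eval x = ellIsEdge ℓ G x := by
  rw [coverTree, eval_branchOnFirst]
  cases hfind : (C.sort (· ≤ ·)).find? (x ∘ fun u => (0, u)) with
  | none =>
    rw [List.find?_eq_none] at hfind
    exact (ellIsEdge_eq_false_of_cover hC fun w hw => by
      simpa using hfind w ((Finset.mem_sort _).2 hw)).symm
  | some u =>
    obtain ⟨hu, earlier, later, hsplit, hearlier⟩ := List.find?_eq_some_iff_append.1 hfind
    refine eval_coverBranch hu fun w hw hwu => ?_
    have hsorted := Finset.pairwise_sort C (· ≤ ·)
    rw [← Finset.mem_sort (· ≤ ·), hsplit] at hw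
    rw [hsplit, List.pairwise_append, List.pairwise_cons] at hsorted
    rcases List.mem_append.1 hw with hw | hw
    · simpa using hearlier w hw
    · rcases List.mem_cons.1 hw with rfl | hw
      · exact absurd hwu (lt_irrefl w)
      · exact absurd (hsorted.2.1.1 w hw) (not_le.2 hwu)

end CoverTree

section Size

open DTree

variable {n ℓ : ℕ} {G : SimpleGraph (Fin n)} {C : Finset (Fin n)}

theorem size_edgeCheck_le (u v : Fin n) : (edgeCheck ℓ u v).size ≤ n + ℓ := by
  have hcard := (Finset.univ \ {u, v}).card_le_univ
  simp only [Fintype.card_fin] at hcard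
  simp [edgeCheck, size_checkAll, dupQueries, size, hcard]

theorem size_coverBranch_le (u : Fin n) :
    (coverBranch G C ℓ u).size ≤ ℓ + (laterNbrs G C u).card * (n + ℓ + 1) := by
  have hsum := List.sum_le_card_nsmul
    ((laterNbrs G C u).toList.map fun v => (edgeCheck ℓ u v).size + 1) (n + ℓ + 1)
    (by simpa using fun v _ => size_edgeCheck_le u v)
  simpa [coverBranch, size_checkAll, size_branchOnFirst, dupQueries, size] using hsum

theorem sum_card_laterNbrs_le [Fintype G.edgeSet] :
    ∑ u ∈ C, (laterNbrs G C u).card ≤ G.edgeFinset.card := by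
  rw [← Finset.card_sigma]
  refine Finset.card_le_card_of_injOn (fun p => s(p.1, p.2)) (fun p hp => ?_) ?_
  · rw [Finset.mem_coe, Finset.mem_sigma, laterNbrs, Finset.mem_filter] at hp
    simpa using hp.2.2.1
  · rintro ⟨a, b⟩ hab ⟨c, d⟩ hcd heq
    simp only [Finset.coe_sigma, Set.mem_sigma_iff, Finset.mem_coe, laterNbrs, Finset.mem_filter,
      Finset.mem_univ, true_and] at hab hcd
    rcases Sym2.eq_iff.1 heq with ⟨rfl, rfl⟩ | ⟨rfl, rfl⟩
    · rfl
    · -- an edge with both ends in `C` is counted only at its smaller end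
      obtain rfl : b = a := le_antisymm (not_lt.1 fun h => hcd.2.2 ⟨hab.1, h⟩)
        (not_lt.1 fun h => hab.2.2 ⟨hcd.1, h⟩)
      rfl

theorem size_coverTree_le [Fintype G.edgeSet] :
    (coverTree G C ℓ).size ≤ C.card * (ℓ + 1) + G.edgeFinset.card * (n + ℓ + 1) := by
  rw [coverTree, size_branchOnFirst, ← List.sum_toFinset _ (Finset.sort_nodup C _),
    Finset.sort_toFinset]
  calc ∑ u ∈ C, ((coverBranch G C ℓ u).size + 1) + (leaf false : DTree _).size
      ≤ ∑ u ∈ C, ((ℓ + 1) + (laterNbrs G C u).card * (n + ℓ + 1)) := by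
        simp only [size, add_zero]
        refine Finset.sum_le_sum fun u _ => ?_
        linarith [size_coverBranch_le (G := G) (C := C) (ℓ := ℓ) u]
    _ = C.card * (ℓ + 1) + (∑ u ∈ C, (laterNbrs G C u).card) * (n + ℓ + 1) := by
        rw [Finset.sum_add_distrib, Finset.sum_const, smul_eq_mul, Finset.sum_mul]
    _ ≤ C.card * (ℓ + 1) + G.edgeFinset.card * (n + ℓ + 1) := by
        gcongr
        exact sum_card_laterNbrs_le

end Size

/-- if G (n vertices, m edges) has a vertex cover of size at most k, then for
any ℓ there is a decision tree computing ℓ-IsEdge_G of size at most (ℓ+1)(k+m) + mn. -/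
theorem stmt11 {n : ℕ} (G : SimpleGraph (Fin n)) [DecidableRel G.Adj] (ℓ k : ℕ)
    (C : Finset (Fin n)) (hC : ∀ ⦃u v : Fin n⦄, G.Adj u v → u ∈ C ∨ v ∈ C)
    (hCk : C.card ≤ k) :
    ∃ T : DTree (Fin (ℓ + 1) × Fin n), (∀ x, T.eval x = ellIsEdge ℓ G x) ∧
      T.size ≤ (ℓ + 1) * (k + G.edgeFinset.card) + G.edgeFinset.card * n := by
  refine ⟨coverTree G C ℓ, eval_coverTree hC, ?_⟩
  calc (coverTree G C ℓ).size
      ≤ C.card * (ℓ + 1) + G.edgeFinset.card * (n + ℓ + 1) := size_coverTree_le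
    _ ≤ k * (ℓ + 1) + G.edgeFinset.card * (n + ℓ + 1) := by gcongr
    _ = (ℓ + 1) * (k + G.edgeFinset.card) + G.edgeFinset.card * n := by ring
end

section
/- If every vertex cover of a graph G with m edges has size at least k', then for any ℓ ∈ ℕ every decision tree computing ℓ-IsEdge_G has size at least (ℓ+1)(k'+m). -/
open Classical

/-!
An adversary argument with a potential. A restriction `ρ` fixes some input coordinates; an
edge `e` is live if its canonical accepting input (every copy of both endpoints set to 1, all
else 0) is consistent with `ρ`. The potential `(ℓ + 1) * (#live + τ live) - #(coordinates fixed
to 1)`, with `τ` the vertex cover number, is `(ℓ + 1) * (m + τ G) ≥ (ℓ + 1) * (m + k')` for the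
empty restriction. It vanishes once the function is constant on the inputs consistent with `ρ`:
flipping any unfixed coordinate over an endpoint of a live edge rejects, so a single live edge
is left with all its `2 (ℓ + 1)` coordinates fixed to 1. Querying a coordinate splits the live
edges at its vertex, and the potentials of the two restrictions so obtained add up to at least
that of `ρ` minus one. Hence a tree that is correct on the inputs consistent with `ρ` has at
least as many internal nodes as the potential of `ρ`.
-/

open Finset

namespace Finset

variable {α : Type*}

def IsVertexCover (E : Finset (Sym2 α)) (C : Finset α) : Prop :=
  ∀ e ∈ E, ∃ v ∈ C, v ∈ e

noncomputable def vertexCoverNum (E : Finset (Sym2 α)) : ℕ :=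
  sInf {k | ∃ C, E.IsVertexCover C ∧ #C = k}

variable {E F : Finset (Sym2 α)} {C : Finset α}

theorem IsVertexCover.vertexCoverNum_le (h : E.IsVertexCover C) : E.vertexCoverNum ≤ #C :=
  Nat.sInf_le ⟨C, h, rfl⟩

theorem exists_isVertexCover_card_eq_vertexCoverNum [DecidableEq α] (E : Finset (Sym2 α)) :
    ∃ C, E.IsVertexCover C ∧ #C = E.vertexCoverNum :=
  Nat.sInf_mem (s := {k | ∃ C, E.IsVertexCover C ∧ #C = k})
    ⟨_, E.image (·.out.1), fun e he => ⟨_, mem_image_of_mem _ he, e.out_fst_mem⟩, rfl⟩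

@[simp]
theorem vertexCoverNum_empty : (∅ : Finset (Sym2 α)).vertexCoverNum = 0 :=
  Nat.eq_zero_of_le_zero (IsVertexCover.vertexCoverNum_le (C := ∅) (by simp [IsVertexCover]))

theorem vertexCoverNum_pos [DecidableEq α] (hE : E.Nonempty) : 0 < E.vertexCoverNum := by
  obtain ⟨C, hC, hcard⟩ := E.exists_isVertexCover_card_eq_vertexCoverNum
  obtain ⟨e, he⟩ := hE
  obtain ⟨v, hv, -⟩ := hC e he
  exact hcard ▸ card_pos.2 ⟨v, hv⟩

theorem vertexCoverNum_le_one_of_forall_mem {v : α} (h : ∀ e ∈ E, v ∈ e) :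
    E.vertexCoverNum ≤ 1 :=
  (IsVertexCover.vertexCoverNum_le (C := {v}) fun e he => ⟨v, mem_singleton_self v, h e he⟩).trans
    (card_singleton v).le

theorem vertexCoverNum_union_le [DecidableEq α] :
    (E ∪ F).vertexCoverNum ≤ E.vertexCoverNum + F.vertexCoverNum := by
  obtain ⟨C, hC, hCcard⟩ := E.exists_isVertexCover_card_eq_vertexCoverNum
  obtain ⟨D, hD, hDcard⟩ := F.exists_isVertexCover_card_eq_vertexCoverNum
  have hCD : (E ∪ F).IsVertexCover (C ∪ D) := by
    intro e he
    rcases mem_union.1 he with he | he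
    · obtain ⟨v, hv, hve⟩ := hC e he; exact ⟨v, mem_union_left D hv, hve⟩
    · obtain ⟨v, hv, hve⟩ := hD e he; exact ⟨v, mem_union_right C hv, hve⟩
  calc (E ∪ F).vertexCoverNum ≤ #(C ∪ D) := hCD.vertexCoverNum_le
    _ ≤ #C + #D := card_union_le C D
    _ = _ := by rw [hCcard, hDcard]

end Finset

namespace DTree

variable {α : Type} [DecidableEq α] {ρ : α → Option Bool} {q : α}

def Consistent (ρ : α → Option Bool) (x : α → Bool) : Prop :=
  ∀ q b, ρ q = some b → x q = b

theorem consistent_update_iff (hq : ρ q = none) (b : Bool) (x : α → Bool) :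
    Consistent (Function.update ρ q (some b)) x ↔ Consistent ρ x ∧ x q = b := by
  refine ⟨fun h => ⟨fun q' b' hq' => h q' b' ?_, h q b (Function.update_self ..)⟩, ?_⟩
  · rwa [Function.update_of_ne (by rintro rfl; simp [hq] at hq')]
  · rintro ⟨h, rfl⟩ q' b' hq'
    by_cases hqq : q' = q
    · subst hqq; simpa using hq'
    · exact h q' b' (by rwa [Function.update_of_ne hqq] at hq')

theorem Consistent.update {x : α → Bool} (h : Consistent ρ x) (hq : ρ q = none) (b : Bool) :
    Consistent ρ (Function.update x q b) := fun q' b' hq' => by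
  rw [Function.update_of_ne (by rintro rfl; simp [hq] at hq')]
  exact h q' b' hq'

theorem potential_le_size {f : (α → Bool) → Bool} {μ : (α → Option Bool) → ℕ}
    (hleaf : ∀ ρ b, (∀ x, Consistent ρ x → f x = b) → μ ρ = 0)
    (hstep : ∀ ρ q, ρ q = none →
      μ ρ ≤ 1 + μ (Function.update ρ q (some false)) + μ (Function.update ρ q (some true))) :
    ∀ (T : DTree α) (ρ : α → Option Bool), (∀ x, Consistent ρ x → T.eval x = f x) →
      μ ρ ≤ T.size
  | .leaf b, ρ, hT => (hleaf ρ b fun x hx => (hT x hx).symm).le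
  | .node i l r, ρ, hT => by
    have hl : ∀ ρ', (∀ x, Consistent ρ' x → Consistent ρ x ∧ x i = false) → μ ρ' ≤ l.size :=
      fun ρ' h => potential_le_size hleaf hstep l ρ' fun x hx => by
        simpa [DTree.eval, (h x hx).2] using hT x (h x hx).1
    have hr : ∀ ρ', (∀ x, Consistent ρ' x → Consistent ρ x ∧ x i = true) → μ ρ' ≤ r.size :=
      fun ρ' h => potential_le_size hleaf hstep r ρ' fun x hx => by
        simpa [DTree.eval, (h x hx).2] using hT x (h x hx).1
    simp only [DTree.size]
    cases hρi : ρ i with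
    | some b =>
      cases b
      · have := hl ρ fun x hx => ⟨hx, hx i false hρi⟩; omega
      · have := hr ρ fun x hx => ⟨hx, hx i true hρi⟩; omega
    | none =>
      have := hstep ρ i hρi
      have := hl _ fun x => (consistent_update_iff hρi false x).1
      have := hr _ fun x => (consistent_update_iff hρi true x).1
      omega

variable [Fintype α]

def numTrue (ρ : α → Option Bool) : ℕ :=
  #{q | ρ q = some true}

theorem numTrue_update_false (hq : ρ q = none) :
    numTrue (Function.update ρ q (some false)) = numTrue ρ := by
  unfold numTrue
  congr 1
  ext q'
  by_cases h : q' = q <;> simp [Function.update_apply, h, hq]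

theorem numTrue_update_true (hq : ρ q = none) :
    numTrue (Function.update ρ q (some true)) = numTrue ρ + 1 := by
  have : univ.filter (fun q' => Function.update ρ q (some true) q' = some true) =
      insert q (univ.filter fun q' => ρ q' = some true) := by
    ext q'
    by_cases h : q' = q <;> simp [Function.update_apply, h]
  rw [numTrue, this, card_insert_of_notMem (by simp [hq]), numTrue]

end DTree

namespace EllIsEdge

open DTree

variable {n : ℕ} (ℓ : ℕ)

def edgeInput (e : Sym2 (Fin n)) : Fin (ℓ + 1) × Fin n → Bool :=
  fun q => decide (q.2 ∈ e)

variable (G : SimpleGraph (Fin n))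

theorem ellIsEdge_edgeInput {e : Sym2 (Fin n)} (he : e ∈ G.edgeSet) :
    ellIsEdge ℓ G (edgeInput ℓ e) = true := by
  simp only [ellIsEdge, decide_eq_true_eq]
  exact ⟨⟨e, he, rfl⟩, fun _ _ h => h⟩

theorem ellIsEdge_update_edgeInput {e : Sym2 (Fin n)} (he : e ∈ G.edgeSet) {u : Fin n}
    (hu : u ∈ e) (j : Fin (ℓ + 1)) :
    ellIsEdge ℓ G (Function.update (edgeInput ℓ e) (j, u) false) = false := by
  obtain ⟨v, rfl⟩ := Sym2.mem_iff_exists.1 hu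
  simp only [ellIsEdge, decide_eq_false_iff_not, not_and, not_forall]
  rintro ⟨e', he', hrow⟩
  by_cases hj : j = 0
  · -- row 0 is now the indicator of `{v}`, which is not an edge
    subst hj
    induction e' using Sym2.ind with | _ a b => ?_
    have ha := congrFun hrow a
    have hb := congrFun hrow b
    simp [Function.update_apply, edgeInput] at ha hb
    exact absurd ((ha.2.resolve_left ha.1).trans (hb.2.resolve_left hb.1).symm) (G.ne_of_adj he')
  · exact ⟨j, u, by simp [edgeInput, Ne.symm hj], by simp⟩

variable [DecidableRel G.Adj]

noncomputable def liveEdges (ρ : Fin (ℓ + 1) × Fin n → Option Bool) : Finset (Sym2 (Fin n)) :=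
  {e ∈ G.edgeFinset | Consistent ρ (edgeInput ℓ e)}

noncomputable def potential (ρ : Fin (ℓ + 1) × Fin n → Option Bool) : ℕ :=
  (ℓ + 1) * (#(liveEdges ℓ G ρ) + (liveEdges ℓ G ρ).vertexCoverNum) - numTrue ρ

variable {ℓ G} {ρ : Fin (ℓ + 1) × Fin n → Option Bool} {e : Sym2 (Fin n)}

theorem mem_liveEdges : e ∈ liveEdges ℓ G ρ ↔ e ∈ G.edgeSet ∧ Consistent ρ (edgeInput ℓ e) := by
  simp [liveEdges]

theorem liveEdges_update_false {q : Fin (ℓ + 1) × Fin n} (hq : ρ q = none) :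
    liveEdges ℓ G (Function.update ρ q (some false)) = {e ∈ liveEdges ℓ G ρ | q.2 ∉ e} := by
  ext e
  simp [liveEdges, consistent_update_iff hq, edgeInput, and_assoc]

theorem liveEdges_update_true {q : Fin (ℓ + 1) × Fin n} (hq : ρ q = none) :
    liveEdges ℓ G (Function.update ρ q (some true)) = {e ∈ liveEdges ℓ G ρ | q.2 ∈ e} := by
  ext e
  simp [liveEdges, consistent_update_iff hq, edgeInput, and_assoc]

theorem mem_of_mem_liveEdges (he : e ∈ liveEdges ℓ G ρ) {q : Fin (ℓ + 1) × Fin n}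
    (hq : ρ q = some true) : q.2 ∈ e := by
  simpa [edgeInput] using ((mem_liveEdges.1 he).2 q true hq).symm

theorem numTrue_le_of_mem_liveEdges {e' : Sym2 (Fin n)} (he : e ∈ liveEdges ℓ G ρ)
    (he' : e' ∈ liveEdges ℓ G ρ) (hne : e ≠ e') : numTrue ρ ≤ ℓ + 1 := by
  rcases ({q | ρ q = some true} : Finset _).eq_empty_or_nonempty with h | ⟨q₀, hq₀⟩
  · simp [numTrue, h]
  rw [mem_filter] at hq₀
  have hsub : ({q | ρ q = some true} : Finset _) ⊆ univ ×ˢ {q₀.2} := by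
    intro q hq
    rw [mem_filter] at hq
    simp only [mem_product, mem_univ, mem_singleton, true_and]
    by_contra hqq
    exact hne (Sym2.eq_of_ne_mem hqq (mem_of_mem_liveEdges he hq.2) (mem_of_mem_liveEdges he hq₀.2)
      (mem_of_mem_liveEdges he' hq.2) (mem_of_mem_liveEdges he' hq₀.2))
  simpa [numTrue] using card_le_card hsub

theorem eq_some_true_of_forall_consistent {b : Bool}
    (h : ∀ x, Consistent ρ x → ellIsEdge ℓ G x = b) (he : e ∈ liveEdges ℓ G ρ) :
    ∀ u ∈ e, ∀ j, ρ (j, u) = some true := by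
  obtain ⟨heG, hcons⟩ := mem_liveEdges.1 he
  intro u hu j
  cases hρ : ρ (j, u) with
  | none =>
    have hflip := h _ (hcons.update hρ false)
    have hedge := h _ hcons
    rw [ellIsEdge_update_edgeInput ℓ G heG hu] at hflip
    rw [ellIsEdge_edgeInput ℓ G heG] at hedge
    exact absurd (hflip.trans hedge.symm) Bool.false_ne_true
  | some c => simpa [edgeInput, hu] using hcons _ c hρ

theorem two_mul_le_numTrue (he : ¬e.IsDiag) (h : ∀ u ∈ e, ∀ j, ρ (j, u) = some true) :
    (ℓ + 1) * 2 ≤ numTrue ρ := by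
  have hsub : (univ ×ˢ e.toFinset : Finset (Fin (ℓ + 1) × Fin n)) ⊆
      univ.filter (fun q => ρ q = some true) := by
    intro q hq
    simp only [mem_product, Sym2.mem_toFinset] at hq
    simpa using h q.2 hq.2 q.1
  simpa [numTrue, card_product, Sym2.card_toFinset_of_not_isDiag e he] using card_le_card hsub

theorem potential_eq_zero_of_forall_consistent {b : Bool}
    (h : ∀ x, Consistent ρ x → ellIsEdge ℓ G x = b) : potential ℓ G ρ = 0 := by
  rcases (liveEdges ℓ G ρ).eq_empty_or_nonempty with hE | ⟨e, he⟩
  · simp [potential, hE]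
  have hfix := eq_some_true_of_forall_consistent h he
  have hdiag : ¬e.IsDiag := G.not_isDiag_of_mem_edgeSet (mem_liveEdges.1 he).1
  have hsub : liveEdges ℓ G ρ ⊆ {e} := by
    intro e' he'
    induction e using Sym2.ind with | _ u v => ?_
    exact mem_singleton.2 (Sym2.eq_of_ne_mem hdiag (mem_of_mem_liveEdges he' (hfix u (by simp) 0))
      (mem_of_mem_liveEdges he' (hfix v (by simp) 0)) (by simp) (by simp))
  have hcard : #(liveEdges ℓ G ρ) ≤ 1 := (card_le_card hsub).trans (card_singleton e).le
  have hcover : (liveEdges ℓ G ρ).vertexCoverNum ≤ 1 :=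
    vertexCoverNum_le_one_of_forall_mem (v := e.out.1) fun e' he' => by
      rw [mem_singleton.1 (hsub he')]
      exact e.out_fst_mem
  have := two_mul_le_numTrue hdiag hfix
  refine Nat.sub_eq_zero_of_le ?_
  calc (ℓ + 1) * (#(liveEdges ℓ G ρ) + (liveEdges ℓ G ρ).vertexCoverNum)
      ≤ (ℓ + 1) * 2 := by gcongr; omega
    _ ≤ numTrue ρ := this

theorem isVertexCover_edgeFinset_iff {C : Finset (Fin n)} :
    G.edgeFinset.IsVertexCover C ↔ G.IsVertexCover C := by
  refine ⟨fun h u v huv => ?_, fun h e he => ?_⟩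
  · obtain ⟨w, hw, hwe⟩ := h s(u, v) (G.mem_edgeFinset.2 huv)
    rcases Sym2.mem_iff.1 hwe with rfl | rfl
    exacts [Or.inl hw, Or.inr hw]
  · induction e using Sym2.ind with | _ u v => ?_
    rcases h (G.mem_edgeFinset.1 he) with hu | hv
    exacts [⟨u, hu, Sym2.mem_mk_left u v⟩, ⟨v, hv, Sym2.mem_mk_right u v⟩]

/- Before any coordinate is fixed to 1 the cover number is subadditive under the split;
afterwards all live edges share a vertex, so their cover number is 1 and at most `ℓ + 1`
coordinates are fixed to 1. -/
theorem mul_vertexCoverNum_add_numTrue_le {v : Fin n} {e₀ e₁ : Sym2 (Fin n)}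
    (he₀ : e₀ ∈ {e ∈ liveEdges ℓ G ρ | v ∉ e}) (he₁ : e₁ ∈ {e ∈ liveEdges ℓ G ρ | v ∈ e}) :
    (ℓ + 1) * (liveEdges ℓ G ρ).vertexCoverNum + numTrue ρ ≤
      (ℓ + 1) * ({e ∈ liveEdges ℓ G ρ | v ∉ e}.vertexCoverNum +
        {e ∈ liveEdges ℓ G ρ | v ∈ e}.vertexCoverNum) := by
  rcases Nat.eq_zero_or_pos (numTrue ρ) with ht | ht
  · rw [ht, add_zero]
    gcongr
    calc (liveEdges ℓ G ρ).vertexCoverNum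
        = ({e ∈ liveEdges ℓ G ρ | v ∉ e} ∪ {e ∈ liveEdges ℓ G ρ | v ∈ e}).vertexCoverNum := by
          rw [union_comm, filter_union_filter_not_eq]
      _ ≤ _ := vertexCoverNum_union_le
  obtain ⟨q, hq⟩ := card_pos.1 ht
  have hcover : (liveEdges ℓ G ρ).vertexCoverNum ≤ 1 :=
    vertexCoverNum_le_one_of_forall_mem fun e he => mem_of_mem_liveEdges he (mem_filter.1 hq).2
  have hne : e₀ ≠ e₁ := by rintro rfl; exact (mem_filter.1 he₀).2 (mem_filter.1 he₁).2
  have hpos₀ := vertexCoverNum_pos ⟨e₀, he₀⟩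
  have hpos₁ := vertexCoverNum_pos ⟨e₁, he₁⟩
  calc (ℓ + 1) * (liveEdges ℓ G ρ).vertexCoverNum + numTrue ρ ≤ (ℓ + 1) * 1 + (ℓ + 1) := by
        gcongr
        exact numTrue_le_of_mem_liveEdges (mem_filter.1 he₀).1 (mem_filter.1 he₁).1 hne
    _ = (ℓ + 1) * 2 := by ring
    _ ≤ _ := by gcongr; omega

theorem potential_le_of_update {q : Fin (ℓ + 1) × Fin n} (hq : ρ q = none) :
    potential ℓ G ρ ≤ 1 + potential ℓ G (Function.update ρ q (some false)) +
      potential ℓ G (Function.update ρ q (some true)) := by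
  rw [potential, potential, potential, liveEdges_update_false hq, liveEdges_update_true hq,
    numTrue_update_false hq, numTrue_update_true hq]
  set E := liveEdges ℓ G ρ with hE
  have hcard : #{e ∈ E | q.2 ∈ e} + #{e ∈ E | q.2 ∉ e} = #E := card_filter_add_card_filter_not _
  rcases ({e ∈ E | q.2 ∈ e} : Finset _).eq_empty_or_nonempty with hE₁ | ⟨e₁, he₁⟩
  · have hE₀ : {e ∈ E | q.2 ∉ e} = E := filter_true_of_mem fun e he hqe =>
      (eq_empty_iff_forall_notMem.1 hE₁) e (mem_filter.2 ⟨he, hqe⟩)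
    rw [hE₀]
    omega
  rcases ({e ∈ E | q.2 ∉ e} : Finset _).eq_empty_or_nonempty with hE₀ | ⟨e₀, he₀⟩
  · have hE₁ : {e ∈ E | q.2 ∈ e} = E := filter_true_of_mem fun e he => not_not.1 fun hqe =>
      (eq_empty_iff_forall_notMem.1 hE₀) e (mem_filter.2 ⟨he, hqe⟩)
    rw [hE₁]
    omega
  have hne : e₀ ≠ e₁ := by rintro rfl; exact (mem_filter.1 he₀).2 (mem_filter.1 he₁).2
  have := numTrue_le_of_mem_liveEdges (mem_filter.1 he₀).1 (mem_filter.1 he₁).1 hne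
  have := Nat.le_mul_of_pos_right (ℓ + 1) (card_pos.2 ⟨e₀, he₀⟩)
  have := Nat.le_mul_of_pos_right (ℓ + 1) (card_pos.2 ⟨e₁, he₁⟩)
  have := Nat.le_mul_of_pos_right (ℓ + 1) (vertexCoverNum_pos ⟨e₁, he₁⟩)
  have key := mul_vertexCoverNum_add_numTrue_le he₀ he₁
  rw [← hE] at key
  rw [← hcard]
  simp only [Nat.mul_add] at key ⊢
  omega

end EllIsEdge

open DTree EllIsEdge in
/-- if every vertex cover of G (m edges) has size at least k', then for any ℓ
every decision tree computing ℓ-IsEdge_G has size at least (ℓ+1)(k'+m). -/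
theorem stmt12 {n : ℕ} (G : SimpleGraph (Fin n)) [DecidableRel G.Adj] (ℓ k' : ℕ)
    (hk : ∀ C : Finset (Fin n), (∀ ⦃u v : Fin n⦄, G.Adj u v → u ∈ C ∨ v ∈ C) → k' ≤ C.card)
    (T : DTree (Fin (ℓ + 1) × Fin n)) (hT : ∀ x, T.eval x = ellIsEdge ℓ G x) :
    (ℓ + 1) * (k' + G.edgeFinset.card) ≤ T.size := by
  obtain ⟨C, hC, hCcard⟩ := G.edgeFinset.exists_isVertexCover_card_eq_vertexCoverNum
  have hk' : k' ≤ G.edgeFinset.vertexCoverNum := hCcard ▸ hk C (isVertexCover_edgeFinset_iff.1 hC)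
  have hlive : liveEdges ℓ G (fun _ => none) = G.edgeFinset :=
    filter_true_of_mem fun _ _ _ _ h => by cases h
  have hnum : numTrue (fun _ : Fin (ℓ + 1) × Fin n => none) = 0 := by simp [numTrue]
  have hsize : potential ℓ G (fun _ => none) ≤ T.size :=
    potential_le_size (f := ellIsEdge ℓ G) (fun _ _ h => potential_eq_zero_of_forall_consistent h)
      (fun _ _ hq => potential_le_of_update hq) T _ fun x _ => hT x
  calc (ℓ + 1) * (k' + #G.edgeFinset)
      ≤ (ℓ + 1) * (#G.edgeFinset + G.edgeFinset.vertexCoverNum) := by rw [add_comm k']; gcongr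
    _ = potential ℓ G (fun _ => none) := by rw [potential, hlive, hnum, Nat.sub_zero]
    _ ≤ T.size := hsize
end

section
/- Let G be a graph with m edges, ℓ ∈ ℕ, and suppose every vertex cover of G has size at least k'. Let ℓ-D_G consist of all generalized edge indicators ℓ-Ind[e] = (Ind[e], ..., Ind[e]) ∈ ({0,1}^n)^{ℓ+1}, all strings obtained from some ℓ-Ind[e] by flipping one of its 2ℓ+2 one-coordinates to zero, and the all-zeros string. Then every decision tree agreeing with ℓ-IsEdge_G on all points of ℓ-D_G has size at least (ℓ+1)(k'+m). -/
open Classical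

/-- The generalized edge indicator ℓ-Ind[e] = (Ind[e], ..., Ind[e]), encoded as a function on
Fin (ℓ+1) × Fin n. -/
noncomputable def ellInd {n : ℕ} (ℓ : ℕ) (e : Sym2 (Fin n)) :
    Fin (ℓ + 1) × Fin n → Bool :=
  fun p => decide (p.2 ∈ e)

/-- The coreset ℓ-D_G: generalized edge indicators, strings obtained by flipping one of the
2ℓ+2 one-coordinates of some ℓ-Ind[e] to zero, and the all-zeros string. -/
noncomputable def ellDG {n : ℕ} (ℓ : ℕ) (G : SimpleGraph (Fin n)) :
    Set (Fin (ℓ + 1) × Fin n → Bool) :=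
  {x | ∃ e ∈ G.edgeSet, x = ellInd ℓ e} ∪
  {x | ∃ e ∈ G.edgeSet, ∃ p : Fin (ℓ + 1) × Fin n, p.2 ∈ e ∧
        x = Function.update (ellInd ℓ e) p false} ∪
  {fun _ => false}

/-!
A decision tree must query, on the path of an input `x`, every coordinate at which flipping `x`
changes the output; for `ellInd ℓ e` these are all `2ℓ + 2` coordinates of the edge `e`. Induct on
the tree, keeping a vertex cover `C` of the set `A` of edges whose path enters it, with at least
`(ℓ + 1) (|A| + |C|)` nodes: if the root queries a coordinate of the vertex `w`, the edges avoiding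
`w` go left, and those through `w` go right as a star. Below the root, a star with `k` leaves still
needs `ℓ + 1` queries per leaf and the `ℓ` unqueried coordinates of `w`, which pays for its `k`
edges and for adding `w` to the cover.
-/

namespace DTree

variable {α : Type} [DecidableEq α]

def SensitiveOn (T : DTree α) (x : α → Bool) (F : Finset α) : Prop :=
  ∀ p ∈ F, T.eval (Function.update x p (!x p)) ≠ T.eval x

namespace SensitiveOn

variable {T l r : DTree α} {x : α → Bool} {F F' : Finset α} {q : α}

theorem mono (h : T.SensitiveOn x F) (hF' : F' ⊆ F) : T.SensitiveOn x F' :=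
  fun p hp => h p (hF' hp)

theorem right (h : (node q l r).SensitiveOn x F) (hq : x q = true) :
    r.SensitiveOn x (F.erase q) := by
  intro p hp
  have hpq := (Finset.mem_erase.1 hp).1
  simpa [eval, hq, Function.update_of_ne (Ne.symm hpq)] using h p (Finset.mem_of_mem_erase hp)

theorem left (h : (node q l r).SensitiveOn x F) (hq : x q = false) :
    l.SensitiveOn x (F.erase q) := by
  intro p hp
  have hpq := (Finset.mem_erase.1 hp).1
  simpa [eval, hq, Function.update_of_ne (Ne.symm hpq)] using h p (Finset.mem_of_mem_erase hp)

theorem card_le_size (h : T.SensitiveOn x F) : F.card ≤ T.size := by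
  induction T generalizing F with
  | leaf _ =>
    rw [size, Nat.le_zero, Finset.card_eq_zero, Finset.eq_empty_iff_forall_notMem]
    exact fun p hp => h p hp rfl
  | node q l r ihl ihr =>
    have := Finset.pred_card_le_card_erase (s := F) (a := q)
    cases hq : x q
    · have := ihl (h.left hq)
      simp only [size]
      omega
    · have := ihr (h.right hq)
      simp only [size]
      omega

end SensitiveOn

end DTree

section EdgeIndicators

open Finset

variable {n ℓ : ℕ} {G : SimpleGraph (Fin n)} {e : Sym2 (Fin n)}

theorem ellInd_apply (e : Sym2 (Fin n)) (p : Fin (ℓ + 1) × Fin n) :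
    ellInd ℓ e p = decide (p.2 ∈ e) := rfl

theorem ellIsEdge_ellInd (he : e ∈ G.edgeSet) : ellIsEdge ℓ G (ellInd ℓ e) = true := by
  simp only [ellIsEdge, decide_eq_true_eq]
  exact ⟨⟨e, he, rfl⟩, fun _ _ h => h⟩

theorem ellIsEdge_update_ellInd {p : Fin (ℓ + 1) × Fin n} (hp : p.2 ∈ e) :
    ellIsEdge ℓ G (Function.update (ellInd ℓ e) p false) = false := by
  simp only [ellIsEdge, decide_eq_false_iff_not, not_and]
  intro ⟨e', he', hrow⟩ hmono
  by_cases hp1 : p.1 = 0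
  · -- row `0` would be `Ind[e]` with `p.2` removed, which has fewer than two vertices
    have hrow' : ∀ i, i ∈ e' ↔ i ∈ e ∧ i ≠ p.2 := fun i => by
      have key : decide (i ∈ e') = Function.update (ellInd ℓ e) p false (0, i) :=
        (congrFun hrow i).symm
      by_cases hi : ((0 : Fin (ℓ + 1)), i) = p
      · rw [hi, Function.update_self, decide_eq_false_iff_not] at key
        simp [key, ← hi]
      · have hip : i ≠ p.2 := fun h => hi (Prod.ext hp1.symm h)
        rw [Function.update_of_ne hi, ellInd, decide_eq_decide] at key
        simp [key, hip]
    induction e' using Sym2.ind with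
    | _ u v =>
      have huv : u ≠ v := G.ne_of_adj he'
      have hu := (hrow' u).1 (Sym2.mem_mk_left u v)
      have hv := (hrow' v).1 (Sym2.mem_mk_right u v)
      have : e = s(u, v) := (Sym2.mem_and_mem_iff huv).1 ⟨hu.1, hv.1⟩
      rw [this, Sym2.mem_iff] at hp
      rcases hp with h | h
      · exact hu.2 h.symm
      · exact hv.2 h.symm
  · have h0 : ((0 : Fin (ℓ + 1)), p.2) ≠ p := fun h => hp1 (congrArg Prod.fst h).symm
    have := hmono p.1 p.2 (by simpa [Function.update_of_ne h0, ellInd] using hp)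
    simp at this

theorem sensitiveOn_ellInd_of_agrees {T : DTree (Fin (ℓ + 1) × Fin n)}
    (hT : ∀ x ∈ ellDG ℓ G, T.eval x = ellIsEdge ℓ G x) (he : e ∈ G.edgeSet) :
    T.SensitiveOn (ellInd ℓ e) (Finset.univ.filter (·.2 ∈ e)) := by
  intro p hp
  have hp : p.2 ∈ e := (Finset.mem_filter.1 hp).2
  have hxp : ellInd ℓ e p = true := decide_eq_true hp
  have hflip : T.eval (Function.update (ellInd ℓ e) p false) = false :=
    (hT _ (Or.inl (Or.inr ⟨e, he, p, hp, rfl⟩))).trans (ellIsEdge_update_ellInd hp)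
  have hind : T.eval (ellInd ℓ e) = true :=
    (hT _ (Or.inl (Or.inl ⟨e, he, rfl⟩))).trans (ellIsEdge_ellInd he)
  rw [hxp, Bool.not_true, hflip, hind]
  decide

/-- The coordinates of `ellInd ℓ s(w, v)` that a tree must still query once it has queried the
blocks `J` of the centre `w`. -/
def starCoords (J : Finset (Fin (ℓ + 1))) (w v : Fin n) : Finset (Fin (ℓ + 1) × Fin n) :=
  univ ×ˢ {v} ∪ Jᶜ ×ˢ {w}

theorem card_starCoords {w v : Fin n} (hwv : w ≠ v) (J : Finset (Fin (ℓ + 1))) :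
    #(starCoords J w v) = ℓ + 1 + #Jᶜ := by
  rw [starCoords, card_union_of_disjoint, card_product, card_product, card_univ, Fintype.card_fin,
    card_singleton, card_singleton, mul_one, mul_one]
  simp [disjoint_left, hwv]

theorem mul_card_add_card_compl_le_size {w : Fin n} (T : DTree (Fin (ℓ + 1) × Fin n))
    (J : Finset (Fin (ℓ + 1))) (L : Finset (Fin n)) (hwL : w ∉ L) (hL : L.Nonempty)
    (hT : ∀ v ∈ L, T.SensitiveOn (ellInd ℓ s(w, v)) (starCoords J w v)) :
    (ℓ + 1) * #L + #Jᶜ ≤ T.size := by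
  induction T generalizing J L with
  | leaf _ =>
    obtain ⟨v, hv⟩ := hL
    have := (hT v hv).card_le_size
    rw [card_starCoords (ne_of_mem_of_not_mem hv hwL).symm] at this
    simp [DTree.size] at this
  | node q l r ihl ihr =>
    obtain ⟨j, u⟩ := q
    by_cases huw : u = w
    · subst huw
      have hr : ∀ v ∈ L, r.SensitiveOn (ellInd ℓ s(u, v)) (starCoords (insert j J) u v) :=
        fun v hv => ((hT v hv).right (by simp [ellInd_apply])).mono (by
          intro p; simp [starCoords]; grind)
      have := ihr (insert j J) L hwL hL hr
      have := pred_card_le_card_erase (s := Jᶜ) (a := j)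
      rw [compl_insert] at *
      simp only [DTree.size]
      omega
    have hl : ∀ v ∈ L.erase u, l.SensitiveOn (ellInd ℓ s(w, v)) (starCoords J w v) :=
      fun v hv => ((hT v (mem_of_mem_erase hv)).left
        (by simp [ellInd_apply, huw, (ne_of_mem_erase hv).symm])).mono (by
          intro p; simp [starCoords]; grind)
    by_cases huL : u ∈ L
    · have hr := ((hT u huL).right (by simp [ellInd_apply])).card_le_size
      rw [card_erase_of_mem (by simp [starCoords]),
        card_starCoords (ne_of_mem_of_not_mem huL hwL).symm] at hr
      have hcard := card_erase_add_one huL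
      rcases (L.erase u).eq_empty_or_nonempty with hempty | hne
      · rw [hempty, card_empty] at hcard
        simp only [DTree.size, ← hcard]
        omega
      · have := ihl J (L.erase u) (fun h => hwL (mem_of_mem_erase h)) hne hl
        simp only [DTree.size, ← hcard, mul_add_one]
        omega
    · rw [erase_eq_of_notMem huL] at hl
      have := ihl J L hwL hL hl
      simp only [DTree.size]
      omega

theorem filter_mem_eq_image_mk {V : Type*} [Fintype V] [DecidableEq V] {A : Finset (Sym2 V)}
    (w : V) :
    A.filter (w ∈ ·) = (univ.filter (fun v => s(w, v) ∈ A)).image (fun v => s(w, v)) := by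
  ext e
  simp only [mem_filter, mem_image, mem_univ, true_and]
  constructor
  · rintro ⟨he, hw⟩
    obtain ⟨v, rfl⟩ := Sym2.mem_iff_exists.1 hw
    exact ⟨v, he, rfl⟩
  · rintro ⟨v, hv, rfl⟩
    exact ⟨hv, Sym2.mem_mk_left w v⟩

theorem exists_cover_of_sensitiveOn (T : DTree (Fin (ℓ + 1) × Fin n))
    (A : Finset (Sym2 (Fin n))) (hA : ∀ e ∈ A, ¬e.IsDiag)
    (hT : ∀ e ∈ A, T.SensitiveOn (ellInd ℓ e) (univ.filter (·.2 ∈ e))) :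
    ∃ C : Finset (Fin n), (∀ e ∈ A, ∃ v ∈ C, v ∈ e) ∧ (ℓ + 1) * (#A + #C) ≤ T.size := by
  induction T generalizing A with
  | leaf _ =>
    have hA0 : A = ∅ := eq_empty_of_forall_notMem fun e he => by
      obtain ⟨a, ha⟩ : ∃ a, a ∈ e := ⟨_, Sym2.out_fst_mem e⟩
      have hempty := (hT e he).card_le_size
      rw [DTree.size, Nat.le_zero, card_eq_zero] at hempty
      have : ((0 : Fin (ℓ + 1)), a) ∈ univ.filter (·.2 ∈ e) := by simpa using ha
      simp [hempty] at this
    exact ⟨∅, by simp [hA0], by simp [hA0, DTree.size]⟩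
  | node q l r ihl ihr =>
    obtain ⟨j, w⟩ := q
    set A0 := A.filter (w ∉ ·)
    set L := univ.filter (fun v => s(w, v) ∈ A)
    have hl : ∀ e ∈ A0, l.SensitiveOn (ellInd ℓ e) (univ.filter (·.2 ∈ e)) := fun e he =>
      ((hT e (mem_filter.1 he).1).left (by simp [ellInd_apply, (mem_filter.1 he).2])).mono
        (by intro p; simp; grind)
    obtain ⟨C0, hC0, hsize0⟩ := ihl A0 (fun e he => hA e (mem_filter.1 he).1) hl
    have hcardA : #A = #A0 + #L := by
      rw [← card_filter_add_card_filter_not (w ∈ ·), filter_mem_eq_image_mk,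
        card_image_of_injective _ (fun _ _ h => Sym2.congr_right.1 h), add_comm]
    have hcoverA0 : ∀ e ∈ A, w ∉ e → ∃ v ∈ C0, v ∈ e :=
      fun e he hw => hC0 e (mem_filter.2 ⟨he, hw⟩)
    rcases L.eq_empty_or_nonempty with hLe | hL
    · refine ⟨C0, fun e he => ?_, ?_⟩
      · refine hcoverA0 e he fun hw => ?_
        obtain ⟨v, rfl⟩ := Sym2.mem_iff_exists.1 hw
        simpa [hLe] using (show v ∈ L by simpa [L] using he)
      · rw [hcardA, hLe, card_empty, add_zero]
        simp only [DTree.size]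
        omega
    have hwL : w ∉ L := fun h => hA _ (mem_filter.1 h).2 (Sym2.mk_isDiag_iff.2 rfl)
    have hr : ∀ v ∈ L, r.SensitiveOn (ellInd ℓ s(w, v)) (starCoords {j} w v) :=
      fun v hv => ((hT _ (mem_filter.1 hv).2).right (by simp [ellInd_apply])).mono
        (by intro p; simp [starCoords]; grind)
    have hstar := mul_card_add_card_compl_le_size r {j} L hwL hL hr
    rw [card_compl, card_singleton, Fintype.card_fin, Nat.add_sub_cancel] at hstar
    refine ⟨insert w C0, fun e he => ?_, ?_⟩
    · by_cases hw : w ∈ e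
      · exact ⟨w, mem_insert_self w C0, hw⟩
      · obtain ⟨v, hv, hve⟩ := hcoverA0 e he hw
        exact ⟨v, mem_insert_of_mem hv, hve⟩
    · have := card_insert_le w C0
      simp only [DTree.size]
      nlinarith

end EdgeIndicators

/-- if every vertex cover of G (m edges) has size at least k', then every
decision tree agreeing with ℓ-IsEdge_G on all points of the coreset ℓ-D_G has size at least
(ℓ+1)(k'+m). -/
theorem stmt16 {n : ℕ} (G : SimpleGraph (Fin n)) [DecidableRel G.Adj] (ℓ k' : ℕ)
    (hk : ∀ C : Finset (Fin n), (∀ ⦃u v : Fin n⦄, G.Adj u v → u ∈ C ∨ v ∈ C) → k' ≤ C.card)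
    (T : DTree (Fin (ℓ + 1) × Fin n))
    (hT : ∀ x ∈ ellDG ℓ G, T.eval x = ellIsEdge ℓ G x) :
    (ℓ + 1) * (k' + G.edgeFinset.card) ≤ T.size := by
  obtain ⟨C, hC, hsize⟩ := exists_cover_of_sensitiveOn T G.edgeFinset
    (fun e he => G.not_isDiag_of_mem_edgeSet (SimpleGraph.mem_edgeFinset.1 he))
    (fun e he => sensitiveOn_ellInd_of_agrees hT (SimpleGraph.mem_edgeFinset.1 he))
  have hcover : k' ≤ C.card := hk C fun u v huv => by
    obtain ⟨w, hwC, hw⟩ := hC s(u, v) (G.mem_edgeFinset.2 huv)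
    rcases Sym2.mem_iff.1 hw with rfl | rfl
    exacts [Or.inl hwC, Or.inr hwC]
  calc (ℓ + 1) * (k' + G.edgeFinset.card)
      ≤ (ℓ + 1) * (G.edgeFinset.card + C.card) := Nat.mul_le_mul_left _ (by omega)
    _ ≤ T.size := hsize
end
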